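/- arXiv:1205.6459 — 3 statements merged into one kernel-verified Lean document; each statement's English description precedes it below -/
import Mathlib

section
/- For real numbers r_1, ..., r_n each in [0,1] with n ≥ 1, the difference between their arithmetic mean and their product satisfies 0 ≤ (r_1 + ... + r_n)/n − (r_1 · r_2 ··· r_n) ≤ (n−1)/n. -/
/-!
Each `rᵢ` dominates the product, so `n ∏ rᵢ ≤ ∑ rᵢ`. Conversely the Weierstrass product
inequality gives `∑ rᵢ ≤ n - 1 + ∏ rᵢ ≤ n - 1 + n ∏ rᵢ`, using `∏ rᵢ ≥ 0` and `n ≥ 1`.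
-/

namespace Finset

variable {ι R : Type*} {s : Finset ι}

section OrderedSemiring

variable [CommSemiring R] [PartialOrder R] [IsOrderedRing R] {f : ι → R}

theorem prod_le_of_mem_of_le_one (h0 : ∀ i ∈ s, 0 ≤ f i) (h1 : ∀ i ∈ s, f i ≤ 1) {i : ι}
    (hi : i ∈ s) : ∏ j ∈ s, f j ≤ f i := by
  classical
  calc ∏ j ∈ s, f j = f i * ∏ j ∈ s.erase i, f j := (mul_prod_erase s f hi).symm
    _ ≤ f i * 1 := by
      gcongr
      · exact h0 i hi
      · exact prod_le_one (fun j hj => h0 j (mem_of_mem_erase hj))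
          (fun j hj => h1 j (mem_of_mem_erase hj))
    _ = f i := mul_one _

theorem card_mul_prod_le_sum (h0 : ∀ i ∈ s, 0 ≤ f i) (h1 : ∀ i ∈ s, f i ≤ 1) :
    #s * ∏ i ∈ s, f i ≤ ∑ i ∈ s, f i := by
  rw [← nsmul_eq_mul]
  exact card_nsmul_le_sum s f _ fun i hi => prod_le_of_mem_of_le_one h0 h1 hi

end OrderedSemiring

/-- The Weierstrass product inequality `1 - ∏ fᵢ ≤ ∑ (1 - fᵢ)`. -/
theorem sum_le_card_sub_one_add_prod [CommRing R] [LinearOrder R] [IsStrictOrderedRing R]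
    {f : ι → R} (h0 : ∀ i ∈ s, 0 ≤ f i) (h1 : ∀ i ∈ s, f i ≤ 1) :
    ∑ i ∈ s, f i ≤ #s - 1 + ∏ i ∈ s, f i := by
  induction s using cons_induction with
  | empty => simp
  | cons a s ha ih =>
    simp only [forall_mem_cons] at h0 h1
    have hP1 : ∏ i ∈ s, f i ≤ 1 := prod_le_one h0.2 h1.2
    rw [sum_cons, prod_cons, card_cons, Nat.cast_succ]
    linarith [ih h0.2 h1.2, mul_nonneg (sub_nonneg.2 h1.1) (sub_nonneg.2 hP1)]

end Finset

open Finset in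
theorem mean_minus_prod_bounds (n : ℕ) (hn : 1 ≤ n) (r : Fin n → ℝ)
    (hr : ∀ i, 0 ≤ r i ∧ r i ≤ 1) :
    0 ≤ (∑ i, r i) / n - ∏ i, r i ∧
      (∑ i, r i) / n - ∏ i, r i ≤ ((n : ℝ) - 1) / n := by
  have h0 : ∀ i ∈ univ, 0 ≤ r i := fun i _ => (hr i).1
  have h1 : ∀ i ∈ univ, r i ≤ 1 := fun i _ => (hr i).2
  have hn' : (1 : ℝ) ≤ n := by exact_mod_cast hn
  have hP0 : 0 ≤ ∏ i, r i := prod_nonneg h0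
  have lower := card_mul_prod_le_sum h0 h1
  have upper := sum_le_card_sub_one_add_prod h0 h1
  rw [card_univ, Fintype.card_fin] at lower upper
  rw [sub_nonneg, le_div_iff₀ (by positivity), sub_le_iff_le_add, div_add' _ _ _ (by positivity),
    div_le_div_iff_of_pos_right (by positivity)]
  constructor
  · linarith
  · linarith [mul_nonneg hP0 (sub_nonneg.2 hn')]
end

section
/- For real numbers r_1, ..., r_n each in [0,1] with n ≥ 1, 0 ≤ (r_1 + ... + r_n) − n·(r_1 · r_2 ··· r_n) ≤ n − 1. -/
lemma aux_one_sub_sum_le_prod {ι : Type*} [DecidableEq ι] (s : Finset ι) (r : ι → ℝ)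
    (hr : ∀ i, 0 ≤ r i ∧ r i ≤ 1) :
    1 - ∑ i ∈ s, (1 - r i) ≤ ∏ i ∈ s, r i := by
  induction s using Finset.induction_on with
  | empty => simp
  | @insert a s hnot ih =>
    rw [Finset.sum_insert hnot, Finset.prod_insert hnot]
    have hS : 0 ≤ ∑ i ∈ s, (1 - r i) :=
      Finset.sum_nonneg fun i _ => by linarith [(hr i).2]
    have hP : 0 ≤ ∏ i ∈ s, r i := Finset.prod_nonneg fun i _ => (hr i).1
    nlinarith [(hr a).1, (hr a).2, ih]

lemma aux_prod_le {ι : Type*} [Fintype ι] [DecidableEq ι] (r : ι → ℝ)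
    (hr : ∀ i, 0 ≤ r i ∧ r i ≤ 1) (i : ι) :
    ∏ j, r j ≤ r i := by
  rw [← Finset.prod_erase_mul Finset.univ r (Finset.mem_univ i)]
  have h1 : ∏ j ∈ Finset.univ.erase i, r j ≤ 1 :=
    Finset.prod_le_one (fun j _ => (hr j).1) (fun j _ => (hr j).2)
  nlinarith [(hr i).1, Finset.prod_nonneg (fun j (_ : j ∈ Finset.univ.erase i) => (hr j).1)]

theorem sum_minus_n_prod_bounds (n : ℕ) (hn : 1 ≤ n) (r : Fin n → ℝ)
    (hr : ∀ i, 0 ≤ r i ∧ r i ≤ 1) :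
    0 ≤ (∑ i, r i) - n * ∏ i, r i ∧
      (∑ i, r i) - n * ∏ i, r i ≤ (n : ℝ) - 1 := by
  have hP : 0 ≤ ∏ i, r i := Finset.prod_nonneg fun i _ => (hr i).1
  constructor
  · have : (n : ℝ) * ∏ i, r i = ∑ _i : Fin n, ∏ j, r j := by
      simp [Finset.sum_const, Finset.card_univ]
    rw [this]
    have := Finset.sum_le_sum (fun i (_ : i ∈ Finset.univ) => aux_prod_le r hr i)
    linarith
  · have key := aux_one_sub_sum_le_prod Finset.univ r hr
    have hsum : ∑ i ∈ Finset.univ, (1 - r i) = n - ∑ i, r i := by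
      simp [Finset.sum_sub_distrib, Finset.card_univ]
    rw [hsum] at key
    have hn' : (1 : ℝ) ≤ n := by exact_mod_cast hn
    nlinarith
end

section
/- Let a > 0 be real, u_1, ..., u_m ∈ {0,1}, and r_1, ..., r_n ∈ [0,1] with n ≥ 1. Define z = a·n·(u_1···u_m)·(r_1···r_n) and its linearization L = a·(u_1···u_m)·(r_1 + ... + r_n). Then 0 ≤ L − z ≤ a·(n−1). -/
lemma prod_zero_or_one {ι : Type*} [DecidableEq ι] (s : Finset ι) (u : ι → ℝ)
    (hu : ∀ i ∈ s, u i = 0 ∨ u i = 1) : (∏ i ∈ s, u i) = 0 ∨ (∏ i ∈ s, u i) = 1 := by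
  induction s using Finset.induction_on with
  | empty => simp
  | @insert a s hx ih =>
    rw [Finset.prod_insert hx]
    rcases hu a (by simp) with h | h <;>
      rcases ih (fun i hi => hu i (by simp [hi])) with h2 | h2 <;> simp [h, h2]

lemma weier {ι : Type*} [DecidableEq ι] (s : Finset ι) (r : ι → ℝ)
    (h : ∀ i ∈ s, 0 ≤ r i ∧ r i ≤ 1) :
    1 - ∑ i ∈ s, (1 - r i) ≤ ∏ i ∈ s, r i := by
  induction s using Finset.induction_on with
  | empty => simp
  | @insert a s hx ih =>
    have ha := h a (by simp)
    have h' : ∀ i ∈ s, 0 ≤ r i ∧ r i ≤ 1 := fun i hi => h i (by simp [hi])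
    have IH := ih h'
    have hP0 : 0 ≤ ∏ i ∈ s, r i := Finset.prod_nonneg fun i hi => (h' i hi).1
    have hP1 : ∏ i ∈ s, r i ≤ 1 := Finset.prod_le_one (fun i hi => (h' i hi).1) (fun i hi => (h' i hi).2)
    rw [Finset.prod_insert hx, Finset.sum_insert hx]
    nlinarith [mul_nonneg (sub_nonneg.mpr ha.2) (sub_nonneg.mpr hP1)]

theorem linearization_error_pos (a : ℝ) (ha : 0 < a) (m n : ℕ) (hn : 1 ≤ n)
    (u : Fin m → ℝ) (hu : ∀ i, u i = 0 ∨ u i = 1)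
    (r : Fin n → ℝ) (hr : ∀ h, 0 ≤ r h ∧ r h ≤ 1) :
    0 ≤ a * (∏ i, u i) * (∑ h, r h) - a * n * (∏ i, u i) * (∏ h, r h) ∧
      a * (∏ i, u i) * (∑ h, r h) - a * n * (∏ i, u i) * (∏ h, r h)
        ≤ a * ((n : ℝ) - 1) := by
  have hn1 : (1 : ℝ) ≤ (n : ℝ) := by exact_mod_cast hn
  have hP0 : 0 ≤ ∏ h, r h := Finset.prod_nonneg fun i _ => (hr i).1
  -- each prod ≤ r h
  have hple : ∀ h : Fin n, (∏ i, r i) ≤ r h := by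
    intro h
    rw [← Finset.mul_prod_erase Finset.univ r (Finset.mem_univ h)]
    calc r h * ∏ i ∈ Finset.univ.erase h, r i
        ≤ r h * 1 := by
          apply mul_le_mul_of_nonneg_left _ (hr h).1
          exact Finset.prod_le_one (fun i _ => (hr i).1) (fun i _ => (hr i).2)
      _ = r h := mul_one _
  have hsum : (n : ℝ) * (∏ h, r h) ≤ ∑ h, r h := by
    calc (n : ℝ) * (∏ h, r h) = ∑ _h : Fin n, (∏ i, r i) := by
          simp [Finset.sum_const, mul_comm]
      _ ≤ ∑ h, r h := Finset.sum_le_sum fun i _ => hple i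
  have hweier := weier Finset.univ r (fun i _ => hr i)
  have hs : ∑ i : Fin n, (1 - r i) = (n : ℝ) - ∑ h, r h := by
    simp [Finset.sum_sub_distrib]
  rw [hs] at hweier
  have hupper : (∑ h, r h) - (n : ℝ) * (∏ h, r h) ≤ (n : ℝ) - 1 := by
    nlinarith
  rcases prod_zero_or_one Finset.univ u (fun i _ => hu i) with hU | hU <;>
    rw [hU] <;> constructor <;> nlinarith
end
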